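/- Let n ≥ 2 be an even natural number and Ω > 0. Then the Lyapunov function V satisfies: (i) V(0, 0) = 0; (ii) V(x₁, x₂) ≥ x₂² for all (x₁, x₂) with x₁ ≤ Ω^{−1/n}; and (iii) V(x₁, x₂) ≥ 0 for all (x₁, x₂) with x₁ ≤ 2·Ω^{−1/n}. In particular, V is nonnegative on the closed Euclidean ball of radius 2·Ω^{−1/n} centered at the origin of ℝ². -/
import Mathlib


/-- The Lyapunov function
V(x₁,x₂) = −(2Ω/(n+1)²)((x₁ − Ω^{−1/n})^{n+1} + Ω^{−(n+1)/n}) + (2/(n+1))x₁ + x₂². -/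
noncomputable def lyapV (n : ℕ) (Ω : ℝ) (x₁ x₂ : ℝ) : ℝ :=
  -(2 * Ω / ((n : ℝ) + 1) ^ 2) *
      ((x₁ - Ω ^ (-1 / (n : ℝ))) ^ (n + 1) + Ω ^ (-((n : ℝ) + 1) / (n : ℝ)))
    + (2 / ((n : ℝ) + 1)) * x₁ + x₂ ^ 2

/-- For n ≥ 2 even and Ω > 0, the Lyapunov function V satisfies
V(0,0) = 0, V(x₁,x₂) ≥ x₂² when x₁ ≤ Ω^{−1/n}, V ≥ 0 when x₁ ≤ 2Ω^{−1/n},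
and in particular V ≥ 0 on the closed Euclidean ball of radius 2Ω^{−1/n}. -/
theorem laneEmden_lyapunov_positive_definite
    (n : ℕ) (hn : 2 ≤ n) (hne : Even n) (Ω : ℝ) (hΩ : 0 < Ω) :
    lyapV n Ω 0 0 = 0 ∧
    (∀ x₁ x₂ : ℝ, x₁ ≤ Ω ^ (-1 / (n : ℝ)) → x₂ ^ 2 ≤ lyapV n Ω x₁ x₂) ∧
    (∀ x₁ x₂ : ℝ, x₁ ≤ 2 * Ω ^ (-1 / (n : ℝ)) → 0 ≤ lyapV n Ω x₁ x₂) ∧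
    (∀ x₁ x₂ : ℝ, x₁ ^ 2 + x₂ ^ 2 ≤ (2 * Ω ^ (-1 / (n : ℝ))) ^ 2 →
      0 ≤ lyapV n Ω x₁ x₂) := by
  have hNpos : (0:ℝ) < (n:ℝ) := by
    have : (0:ℕ) < n := lt_of_lt_of_le two_pos hn
    exact_mod_cast this
  have hNne : ((n:ℝ)) ≠ 0 := ne_of_gt hNpos
  set c : ℝ := Ω ^ (-1 / (n : ℝ)) with hc
  have hcpos : 0 < c := Real.rpow_pos_of_pos hΩ _
  have hodd : Odd (n + 1) := hne.add_one
  -- key algebraic identities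
  have hcn : Ω * c ^ n = 1 := by
    have : c ^ n = Ω ^ ((-1 / (n:ℝ)) * n) := by
      rw [Real.rpow_mul hΩ.le, Real.rpow_natCast]
    rw [this]
    have : (-1 / (n:ℝ)) * n = -1 := by field_simp
    rw [this, Real.rpow_neg_one]
    field_simp
  have hcn1 : Ω ^ (-((n:ℝ) + 1) / (n:ℝ)) = c ^ (n + 1) := by
    have h1 : c ^ (n + 1) = Ω ^ ((-1 / (n:ℝ)) * (n + 1)) := by
      rw [Real.rpow_mul hΩ.le]
      rw [show ((n:ℝ) + 1) = ((n + 1 : ℕ) : ℝ) by push_cast; ring]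
      rw [Real.rpow_natCast]
    rw [h1]
    congr 1
    field_simp
  -- main inequality: the x₂-free part is nonnegative for x₁ ≤ 2c
  have main : ∀ x₁ : ℝ, x₁ ≤ 2 * c →
      0 ≤ -(2 * Ω / ((n:ℝ) + 1) ^ 2) * ((x₁ - c) ^ (n + 1) + c ^ (n + 1))
        + (2 / ((n:ℝ) + 1)) * x₁ := by
    intro x₁ hx₁
    set u : ℝ := c - x₁ with hu
    have hu' : -c ≤ u := by simp [hu]; linarith
    -- Bernoulli
    have ha : (-2:ℝ) ≤ u / c - 1 := by
      have : -1 ≤ u / c := by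
        rw [le_div_iff₀ hcpos]; linarith
      linarith
    have hbern := one_add_mul_le_pow ha (n + 1)
    have hpow : (1 + (u / c - 1)) ^ (n + 1) = u ^ (n + 1) / c ^ (n + 1) := by
      rw [show 1 + (u / c - 1) = u / c by ring, div_pow]
    rw [hpow] at hbern
    -- multiply by c^(n+1) > 0
    have hcp1 : (0:ℝ) < c ^ (n + 1) := pow_pos hcpos _
    have hkey : c ^ (n + 1) + ((n:ℝ) + 1) * c ^ n * (u - c) ≤ u ^ (n + 1) := by
      have := mul_le_mul_of_nonneg_right hbern hcp1.le
      push_cast at this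
      have hre : (1 + ((n:ℝ) + 1) * (u / c - 1)) * c ^ (n + 1)
          = c ^ (n + 1) + ((n:ℝ) + 1) * c ^ n * (u - c) := by
        field_simp
        ring
      have hre2 : u ^ (n + 1) / c ^ (n + 1) * c ^ (n + 1) = u ^ (n + 1) := by
        field_simp
      rw [hre, hre2] at this
      linarith
    -- (x₁ - c)^(n+1) = -(u^(n+1))
    have hneg : (x₁ - c) ^ (n + 1) = -(u ^ (n + 1)) := by
      rw [show x₁ - c = -u by rw [hu]; ring, hodd.neg_pow]
    -- multiply hkey by Ω and use Ω c^n = 1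
    have hΩkey : Ω * ((x₁ - c) ^ (n + 1) + c ^ (n + 1)) ≤ ((n:ℝ) + 1) * x₁ := by
      have h2 := mul_le_mul_of_nonneg_left hkey hΩ.le
      rw [mul_add] at h2
      have h3 : Ω * (((n:ℝ) + 1) * c ^ n * (u - c)) = ((n:ℝ) + 1) * (u - c) := by
        linear_combination ((n:ℝ) + 1) * (u - c) * hcn
      rw [hneg]
      calc Ω * (-u ^ (n + 1) + c ^ (n + 1)) = Ω * c ^ (n + 1) - Ω * u ^ (n + 1) := by ring
        _ ≤ ((n:ℝ) + 1) * (c - u) := by linarith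
        _ = ((n:ℝ) + 1) * x₁ := by rw [hu]; ring
    have hexp : -(2 * Ω / ((n:ℝ) + 1) ^ 2) * ((x₁ - c) ^ (n + 1) + c ^ (n + 1))
        + (2 / ((n:ℝ) + 1)) * x₁
        = (2 / ((n:ℝ) + 1) ^ 2) *
          (((n:ℝ) + 1) * x₁ - Ω * ((x₁ - c) ^ (n + 1) + c ^ (n + 1))) := by
      field_simp
      ring
    rw [hexp]
    apply mul_nonneg
    · positivity
    · linarith
  -- now assemble the four parts
  have hVform : ∀ x₁ x₂ : ℝ, lyapV n Ω x₁ x₂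
      = (-(2 * Ω / ((n:ℝ) + 1) ^ 2) * ((x₁ - c) ^ (n + 1) + c ^ (n + 1))
        + (2 / ((n:ℝ) + 1)) * x₁) + x₂ ^ 2 := by
    intro x₁ x₂
    rw [lyapV, hcn1]
  refine ⟨?_, ?_, ?_, ?_⟩
  · rw [hVform]
    have : ((0:ℝ) - c) ^ (n + 1) = -(c ^ (n + 1)) := by
      rw [zero_sub, hodd.neg_pow]
    rw [this]
    ring
  · intro x₁ x₂ hx₁
    rw [hVform]
    have := main x₁ (by linarith)
    linarith
  · intro x₁ x₂ hx₁
    rw [hVform]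
    have := main x₁ hx₁
    nlinarith [sq_nonneg x₂]
  · intro x₁ x₂ hx₁
    rw [hVform]
    have hx : x₁ ≤ 2 * c := by nlinarith [sq_nonneg x₂, sq_nonneg (x₁ + 2 * c), hcpos]
    have := main x₁ hx
    nlinarith [sq_nonneg x₂]
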